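/- Let σ > 0, let M̃ and Q̃ be integers with 1 ≤ Q̃ ≤ M̃, and let z_0, …, z_{Q̃−1} be centered square-integrable complex random variables with E[|z_l|²] = σ² for all l and E[z_{l₁} · conj(z_{l₂})] = 0 for l₁ ≠ l₂. Define Z[m] = Σ_{l=0}^{Q̃−1} z_l e^{−j2πlm/M̃}/√M̃ for integers m. Then for all integers m₁, m₂: (i) E[Z[m₁] · conj(Z[m₂])] = (σ²/M̃) · Σ_{l=0}^{Q̃−1} e^{−j2πl(m₁−m₂)/M̃}; and (ii) if sin(π(m₁−m₂)/M̃) ≠ 0, the absolute correlation coefficient |E[Z[m₁] · conj(Z[m₂])]| / √(E[|Z[m₁]|²] · E[|Z[m₂]|²]) equals |sin(πQ̃(m₁−m₂)/M̃)| / (Q̃ · |sin(π(m₁−m₂)/M̃)|). -/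

import Mathlib

/-!
Expanding `Z[m₁] · conj (Z[m₂])` as a double sum over `l₁, l₂` and integrating termwise,
the uncorrelatedness of the `z_l` kills the off-diagonal terms, leaving `σ²/M̃` times a
geometric sum in `e^{−j2π(m₁−m₂)/M̃}`. Taking `m₁ = m₂` gives `E[|Z[m]|²] = σ²Q̃/M̃`, and since
`|e^{jθ} − 1| = 2|sin(θ/2)|`, the modulus of the geometric sum is `|sin(Q̃x)| / |sin x|` with
`x = π(m₁−m₂)/M̃`.
-/

open MeasureTheory Complex ComplexConjugate Finset
open scoped Real BigOperators

theorem Complex.norm_geom_sum_exp_I_mul (θ : ℝ) (n : ℕ) (h : Real.sin (θ / 2) ≠ 0) :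
    ‖∑ l ∈ range n, exp (I * θ) ^ l‖ = |Real.sin (n * θ / 2)| / |Real.sin (θ / 2)| := by
  have hpow : exp (I * θ) ^ n = exp (I * ↑(n * θ)) := by
    rw [← exp_nat_mul]; push_cast; ring_nf
  have hne : exp (I * θ) ≠ 1 := fun h1 => h <| by
    simpa [h1] using norm_exp_I_mul_ofReal_sub_one θ
  rw [geom_sum_eq hne, norm_div, hpow, norm_exp_I_mul_ofReal_sub_one,
    norm_exp_I_mul_ofReal_sub_one, norm_mul, norm_mul, mul_div_mul_left _ _ (by norm_num)]
  simp only [Real.norm_eq_abs]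

section SecondMoments

variable {Ω ι : Type*} [MeasurableSpace Ω] {P : Measure Ω}

theorem integral_mul_conj_self (f : Ω → ℂ) :
    ∫ ω, f ω * conj (f ω) ∂P = ((∫ ω, ‖f ω‖ ^ 2 ∂P : ℝ) : ℂ) := by
  simp_rw [Complex.mul_conj', ← ofReal_pow]
  exact integral_ofReal

theorem MeasureTheory.MemLp.integrable_mul_conj {f g : Ω → ℂ} (hf : MemLp f 2 P)
    (hg : MemLp g 2 P) : Integrable (fun ω => f ω * conj (g ω)) P :=
  hf.integrable_mul (q := 2) hg.star

variable [Fintype ι] {z : ι → Ω → ℂ}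

theorem integral_sum_mul_conj_sum (hz : ∀ i, MemLp (z i) 2 P) (a b : ι → ℂ) :
    ∫ ω, (∑ i, z i ω * a i) * conj (∑ j, z j ω * b j) ∂P =
      ∑ i, ∑ j, a i * conj (b j) * ∫ ω, z i ω * conj (z j ω) ∂P := by
  have hexpand : ∀ ω, (∑ i, z i ω * a i) * conj (∑ j, z j ω * b j) =
      ∑ i, ∑ j, a i * conj (b j) * (z i ω * conj (z j ω)) := fun ω => by
    simp only [map_sum, map_mul, sum_mul_sum]
    exact sum_congr rfl fun i _ => sum_congr rfl fun j _ => by ring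
  simp only [hexpand]
  rw [integral_finsetSum _ fun i _ => integrable_finsetSum _ fun j _ =>
    ((hz i).integrable_mul_conj (hz j)).const_mul _]
  refine sum_congr rfl fun i _ => ?_
  rw [integral_finsetSum _ fun j _ => ((hz i).integrable_mul_conj (hz j)).const_mul _]
  simp only [integral_const_mul]

theorem integral_sum_mul_conj_sum_of_pairwise (hz : ∀ i, MemLp (z i) 2 P) {v : ℝ}
    (hv : ∀ i, ∫ ω, ‖z i ω‖ ^ 2 ∂P = v)
    (horth : Pairwise fun i j => ∫ ω, z i ω * conj (z j ω) ∂P = 0) (a b : ι → ℂ) :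
    ∫ ω, (∑ i, z i ω * a i) * conj (∑ j, z j ω * b j) ∂P = v * ∑ i, a i * conj (b i) := by
  rw [integral_sum_mul_conj_sum hz, mul_sum]
  refine sum_congr rfl fun i _ => ?_
  rw [sum_eq_single_of_mem i (mem_univ i) fun j _ hji => by rw [horth hji.symm, mul_zero],
    integral_mul_conj_self, hv, mul_comm]

end SecondMoments

theorem exp_dft_div_sqrt_mul_conj (M l : ℕ) (m₁ m₂ : ℤ) :
    exp (-(I * 2 * π * l * m₁ / M)) / √(M : ℝ) *
        conj (exp (-(I * 2 * π * l * m₂ / M)) / √(M : ℝ)) =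
      exp (-(I * 2 * π * l * ((m₁ : ℂ) - m₂) / M)) / M := by
  have hsqrt : ((√(M : ℝ) : ℝ) : ℂ) * (√(M : ℝ) : ℝ) = M := by
    rw [← ofReal_mul, Real.mul_self_sqrt (Nat.cast_nonneg M), ofReal_natCast]
  rw [map_div₀, conj_ofReal, div_mul_div_comm, hsqrt, ← exp_conj, ← exp_add]
  congr 2
  simp only [map_neg, map_div₀, map_mul, conj_I, conj_ofReal, map_natCast, map_intCast, map_ofNat]
  ring

theorem norm_sum_exp_dft (M Q : ℕ) (d : ℝ) (h : Real.sin (π * d / M) ≠ 0) :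
    ‖∑ l : Fin Q, exp (-(I * 2 * π * l * (d : ℂ) / M))‖ =
      |Real.sin (π * Q * d / M)| / |Real.sin (π * d / M)| := by
  have hterm : ∀ l : ℕ, exp (-(I * 2 * π * l * (d : ℂ) / M)) =
      exp (I * ↑(-(2 * π * d / M))) ^ l := fun l => by
    rw [← exp_nat_mul]; push_cast; ring_nf
  have hhalf : -(2 * π * d / M) / 2 = -(π * d / M) := by ring
  have hhalfQ : Q * -(2 * π * d / M) / 2 = -(π * Q * d / M) := by ring
  simp only [hterm]
  rw [Fin.sum_univ_eq_sum_range (fun l => exp (I * ↑(-(2 * π * d / M))) ^ l),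
    norm_geom_sum_exp_I_mul _ _ (by rwa [hhalf, Real.sin_neg, neg_ne_zero]), hhalf, hhalfQ,
    Real.sin_neg, Real.sin_neg, abs_neg, abs_neg]

theorem vcp_interference_crosscarrier_correlation_general
    {Ω : Type*} [MeasurableSpace Ω] (P : Measure Ω)
    (Mt Qt : ℕ) (σ : ℝ) (hσ : 0 < σ)
    (z : Fin Qt → Ω → ℂ)
    (hL2 : ∀ l, MemLp (z l) 2 P)
    (hvar : ∀ l, ∫ ω, (‖z l ω‖ : ℝ) ^ 2 ∂P = σ ^ 2)
    (huncorr : ∀ l₁ l₂ : Fin Qt, l₁ ≠ l₂ → ∫ ω, z l₁ ω * conj (z l₂ ω) ∂P = 0)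
    (Z : ℤ → Ω → ℂ)
    (hZ : ∀ m ω, Z m ω = ∑ l : Fin Qt,
      z l ω * Complex.exp (-(Complex.I * 2 * π * l * m / Mt)) / Real.sqrt Mt) :
    ∀ m₁ m₂ : ℤ,
      (∫ ω, Z m₁ ω * conj (Z m₂ ω) ∂P =
        ((σ ^ 2 / Mt : ℝ) : ℂ) *
          ∑ l : Fin Qt, Complex.exp (-(Complex.I * 2 * π * l * ((m₁ : ℂ) - m₂) / Mt))) ∧
      (Real.sin (π * ((m₁ : ℝ) - m₂) / Mt) ≠ 0 →
        ‖∫ ω, Z m₁ ω * conj (Z m₂ ω) ∂P‖ /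
            Real.sqrt ((∫ ω, (‖Z m₁ ω‖ : ℝ) ^ 2 ∂P) * ∫ ω, (‖Z m₂ ω‖ : ℝ) ^ 2 ∂P) =
          |Real.sin (π * Qt * ((m₁ : ℝ) - m₂) / Mt)| /
            (Qt * |Real.sin (π * ((m₁ : ℝ) - m₂) / Mt)|)) := by
  have hcov : ∀ m₁ m₂ : ℤ, ∫ ω, Z m₁ ω * conj (Z m₂ ω) ∂P =
      ((σ ^ 2 / Mt : ℝ) : ℂ) *
        ∑ l : Fin Qt, exp (-(I * 2 * π * l * ((m₁ : ℂ) - m₂) / Mt)) := fun m₁ m₂ => by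
    simp only [fun m ω => (hZ m ω).trans (sum_congr rfl fun l _ => mul_div_assoc _ _ _)]
    rw [integral_sum_mul_conj_sum_of_pairwise hL2 hvar huncorr]
    simp only [exp_dft_div_sqrt_mul_conj, ← sum_div]
    push_cast
    ring
  have hpower : ∀ m, ∫ ω, ‖Z m ω‖ ^ 2 ∂P = σ ^ 2 / Mt * Qt := fun m => by
    have := (integral_mul_conj_self (Z m)).symm.trans (hcov m m)
    simp only [sub_self, mul_zero, zero_div, neg_zero, exp_zero, sum_const, card_univ,
      Fintype.card_fin, nsmul_eq_mul, mul_one] at this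
    exact_mod_cast this
  intro m₁ m₂
  refine ⟨hcov m₁ m₂, fun hsin => ?_⟩
  have hM : (Mt : ℝ) ≠ 0 := by rintro h; simp [h] at hsin
  have hdiff : (m₁ : ℂ) - m₂ = (((m₁ : ℝ) - m₂ : ℝ) : ℂ) := by push_cast; rfl
  rw [hcov, hpower, hpower, Real.sqrt_mul_self_eq_abs, norm_mul, norm_real, hdiff,
    norm_sum_exp_dft _ _ _ hsin, abs_mul, Real.norm_eq_abs, Nat.abs_cast,
    mul_div_mul_left _ _ (by positivity)]
  ring

/-- Correlation of the frequency-domain VCP interference across sub-carriers (Lemma 3 /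
Appendix C of the paper): for a centered white length-`Q̃` sequence `(z_l)` of power `σ²`
and `Z[m] = Σ_{l<Q̃} z_l e^{−j2πlm/M̃}/√M̃`, one has
(i) `E[Z[m₁] conj(Z[m₂])] = (σ²/M̃) Σ_{l<Q̃} e^{−j2πl(m₁−m₂)/M̃}`, and
(ii) if `sin(π(m₁−m₂)/M̃) ≠ 0`, the absolute correlation coefficient equals
`|sin(πQ̃(m₁−m₂)/M̃)| / (Q̃ |sin(π(m₁−m₂)/M̃)|)`. -/
theorem vcp_interference_crosscarrier_correlation
    {Ω : Type*} [MeasurableSpace Ω] (P : Measure Ω) [IsProbabilityMeasure P]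
    (Mt Qt : ℕ) (hQt : 1 ≤ Qt) (hQM : Qt ≤ Mt) (σ : ℝ) (hσ : 0 < σ)
    (z : Fin Qt → Ω → ℂ)
    (hL2 : ∀ l, MemLp (z l) 2 P)
    (hcent : ∀ l, ∫ ω, z l ω ∂P = 0)
    (hvar : ∀ l, ∫ ω, (‖z l ω‖ : ℝ) ^ 2 ∂P = σ ^ 2)
    (huncorr : ∀ l₁ l₂ : Fin Qt, l₁ ≠ l₂ → ∫ ω, z l₁ ω * conj (z l₂ ω) ∂P = 0)
    (Z : ℤ → Ω → ℂ)
    (hZ : ∀ m ω, Z m ω = ∑ l : Fin Qt,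
      z l ω * Complex.exp (-(Complex.I * 2 * π * l * m / Mt)) / Real.sqrt Mt) :
    ∀ m₁ m₂ : ℤ,
      (∫ ω, Z m₁ ω * conj (Z m₂ ω) ∂P =
        ((σ ^ 2 / Mt : ℝ) : ℂ) *
          ∑ l : Fin Qt, Complex.exp (-(Complex.I * 2 * π * l * ((m₁ : ℂ) - m₂) / Mt))) ∧
      (Real.sin (π * ((m₁ : ℝ) - m₂) / Mt) ≠ 0 →
        ‖∫ ω, Z m₁ ω * conj (Z m₂ ω) ∂P‖ /
            Real.sqrt ((∫ ω, (‖Z m₁ ω‖ : ℝ) ^ 2 ∂P) * ∫ ω, (‖Z m₂ ω‖ : ℝ) ^ 2 ∂P) =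
          |Real.sin (π * Qt * ((m₁ : ℝ) - m₂) / Mt)| /
            (Qt * |Real.sin (π * ((m₁ : ℝ) - m₂) / Mt)|)) :=
  vcp_interference_crosscarrier_correlation_general P Mt Qt σ hσ z hL2 hvar huncorr Z hZ
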